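/- Time-reversal symmetry of the symmetrized unitary: let d, n ≥ 1, let H : (Fin d → ℝ) → ℝ → Matrix n n ℂ be continuous with each H(k,t) Hermitian, and let θ be an n×n unitary matrix such that θ·H(k,t)·θ⁻¹ = (H(-k,1-t))* for all k and t. Let U(k,t) be the time-evolution operator of H, and define the symmetrized unitary U_S(k,t) = U(k,(1+t)/2) · (U(k,(1-t)/2))ᴴ. Then θ·U_S(k,t)·θ⁻¹ = (U_S(-k,t))ᵀ for all k and t, where Mᵀ denotes the transpose (equivalently, the entrywise complex conjugate of the conjugate transpose, U_S^{†*}). -/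

import Mathlib

/-!
For a Hermitian generator `A`, the quantity `Y(t)ᴴ X(t)` is conserved along any two solutions of
`X' = -i A X`; hence propagators are unitary, and two solutions of the same equation differ by a
constant right factor. Both `s ↦ θ U(k,s) θ⁻¹` and `s ↦ (U(-k,1-s))*` solve the equation with
generator `(H(-k,1-s))*`, and comparing them at `s = 0` gives
`θ U(k,s) θ⁻¹ = (U(-k,1-s))* (U(-k,1))ᵀ`. In `θ U_S(k,t) θ⁻¹` the two unitary factors
`(U(-k,1))ᵀ` cancel, leaving `(U(-k,(1-t)/2))* (U(-k,(1+t)/2))ᵀ = (U_S(-k,t))ᵀ`.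
-/

open Matrix

attribute [local instance] Matrix.normedAddCommGroup Matrix.normedSpace

theorem hasDerivAt_matrix {𝕜 m p : Type*} [RCLike 𝕜] [Fintype m] [Fintype p]
    {f : ℝ → Matrix m p 𝕜} {f' : Matrix m p 𝕜} {t : ℝ} :
    HasDerivAt f f' t ↔ ∀ i j, HasDerivAt (fun s => f s i j) (f' i j) t :=
  hasDerivAt_pi.trans (forall_congr' fun _ => hasDerivAt_pi)

section MatrixCalculus

variable {𝕜 : Type*} [RCLike 𝕜] {l m p : Type*} [Fintype l] [Fintype m] [Fintype p] {t : ℝ}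

theorem HasDerivAt.matrix_mul {f : ℝ → Matrix l m 𝕜} {g : ℝ → Matrix m p 𝕜}
    {f' : Matrix l m 𝕜} {g' : Matrix m p 𝕜} (hf : HasDerivAt f f' t) (hg : HasDerivAt g g' t) :
    HasDerivAt (fun s => f s * g s) (f' * g t + f t * g') t := by
  rw [hasDerivAt_matrix] at hf hg ⊢
  intro i j
  simp only [mul_apply, Matrix.add_apply, ← Finset.sum_add_distrib]
  exact HasDerivAt.fun_sum fun k _ => (hf i k).fun_mul (hg k j)

theorem HasDerivAt.matrix_conjTranspose {f : ℝ → Matrix m p 𝕜} {f' : Matrix m p 𝕜}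
    (hf : HasDerivAt f f' t) : HasDerivAt (fun s => (f s)ᴴ) f'ᴴ t := by
  rw [hasDerivAt_matrix] at hf ⊢
  exact fun i j => (hf j i).star

theorem HasDerivAt.matrix_map_star {f : ℝ → Matrix m p 𝕜} {f' : Matrix m p 𝕜}
    (hf : HasDerivAt f f' t) : HasDerivAt (fun s => (f s).map star) (f'.map star) t := by
  rw [hasDerivAt_matrix] at hf ⊢
  exact fun i j => (hf i j).star

end MatrixCalculus

theorem eq_of_hasDerivAt_zero {E : Type*} [NormedAddCommGroup E] [NormedSpace ℝ E] {f : ℝ → E}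
    (hf : ∀ t, HasDerivAt f 0 t) (t : ℝ) : f t = f 0 :=
  is_const_of_deriv_eq_zero (fun s => (hf s).differentiableAt) (fun s => (hf s).deriv) t 0

theorem Matrix.conjTranspose_map_star {α m p : Type*} [InvolutiveStar α] (M : Matrix m p α) :
    (M.map star)ᴴ = Mᵀ := by
  rw [← transpose_conjTranspose, conjTranspose_conjTranspose]

theorem Matrix.unitary_conj_mul_conjTranspose {m : Type*} [Fintype m] [DecidableEq m]
    {P : Matrix m m ℂ} (hP : P ∈ unitaryGroup m ℂ) (M N : Matrix m m ℂ) :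
    P * (M * Nᴴ) * star P = (P * M * star P) * (P * N * star P)ᴴ := by
  have hPP : star P * P = 1 := mem_unitaryGroup_iff'.mp hP
  simp only [conjTranspose_mul, star_eq_conjTranspose, conjTranspose_conjTranspose,
    Matrix.mul_assoc] at hPP ⊢
  rw [← Matrix.mul_assoc Pᴴ P, hPP, Matrix.one_mul]

section Schrodinger

variable {m p : Type*} [Fintype m] [Fintype p]

def SolvesSchrodinger (A : ℝ → Matrix m m ℂ) (X : ℝ → Matrix m p ℂ) : Prop :=
  ∀ t, HasDerivAt X (-Complex.I • (A t * X t)) t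

variable {A : ℝ → Matrix m m ℂ} {X : ℝ → Matrix m p ℂ}

theorem SolvesSchrodinger.conjTranspose_mul_eq {q : Type*} [Fintype q] {Y : ℝ → Matrix m q ℂ}
    (hA : ∀ t, (A t).IsHermitian) (hX : SolvesSchrodinger A X) (hY : SolvesSchrodinger A Y)
    (t : ℝ) : (Y t)ᴴ * X t = (Y 0)ᴴ * X 0 := by
  refine eq_of_hasDerivAt_zero (f := fun s => (Y s)ᴴ * X s) (fun s => ?_) t
  refine ((hY s).matrix_conjTranspose.matrix_mul (hX s)).congr_deriv ?_
  rw [conjTranspose_smul, conjTranspose_mul, (hA s).eq]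
  simp [Matrix.smul_mul, Matrix.mul_smul, Matrix.mul_assoc]

theorem SolvesSchrodinger.mem_unitaryGroup [DecidableEq m] {X : ℝ → Matrix m m ℂ}
    (hA : ∀ t, (A t).IsHermitian) (hX : SolvesSchrodinger A X) (h0 : X 0 ∈ unitaryGroup m ℂ)
    (t : ℝ) : X t ∈ unitaryGroup m ℂ := by
  rw [mem_unitaryGroup_iff', star_eq_conjTranspose] at h0 ⊢
  exact (hX.conjTranspose_mul_eq hA hX t).trans h0

theorem SolvesSchrodinger.eq_mul_of_mem_unitaryGroup [DecidableEq m] {Y : ℝ → Matrix m m ℂ}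
    (hA : ∀ t, (A t).IsHermitian) (hX : SolvesSchrodinger A X) (hY : SolvesSchrodinger A Y)
    (hY0 : Y 0 ∈ unitaryGroup m ℂ) (t : ℝ) : X t = Y t * ((Y 0)ᴴ * X 0) := by
  have hYt := mem_unitaryGroup_iff.mp (hY.mem_unitaryGroup hA hY0 t)
  rw [star_eq_conjTranspose] at hYt
  calc X t = Y t * (Y t)ᴴ * X t := by rw [hYt, Matrix.one_mul]
    _ = Y t * ((Y 0)ᴴ * X 0) := by rw [Matrix.mul_assoc, hX.conjTranspose_mul_eq hA hY t]

theorem SolvesSchrodinger.map_star_comp_const_sub (hX : SolvesSchrodinger A X) (c : ℝ) :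
    SolvesSchrodinger (fun s => (A (c - s)).map star) (fun s => (X (c - s)).map star) := by
  intro s
  refine ((hX (c - s)).comp_const_sub c s).matrix_map_star.congr_deriv ?_
  ext i j
  simp [Matrix.mul_apply]

theorem SolvesSchrodinger.unitary_conj [DecidableEq m] {q : Type*} [Fintype q]
    (hX : SolvesSchrodinger A X) {P : Matrix m m ℂ} (hP : P ∈ unitaryGroup m ℂ)
    (Q : Matrix p q ℂ) :
    SolvesSchrodinger (fun s => P * A s * star P) (fun s => P * X s * Q) := by
  intro s
  refine (((hasDerivAt_const s P).matrix_mul (hX s)).matrix_mul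
    (hasDerivAt_const s Q)).congr_deriv ?_
  have hPP : star P * P = 1 := mem_unitaryGroup_iff'.mp hP
  simp [Matrix.mul_smul, Matrix.smul_mul, Matrix.mul_assoc, ← Matrix.mul_assoc (star P), hPP]

theorem SolvesSchrodinger.unitary_conj_eq_map_star_mul_transpose [DecidableEq m]
    {A B X Y : ℝ → Matrix m m ℂ} (hB : ∀ t, (B t).IsHermitian)
    {P : Matrix m m ℂ} (hP : P ∈ unitaryGroup m ℂ)
    (hPAB : ∀ t, P * A t * star P = (B (1 - t)).map star)
    (hX : SolvesSchrodinger A X) (hX0 : X 0 = 1) (hY : SolvesSchrodinger B Y) (hY0 : Y 0 = 1)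
    (t : ℝ) : P * X t * star P = (Y (1 - t)).map star * (Y 1)ᵀ := by
  have hB' : ∀ t, ((B (1 - t)).map star).IsHermitian := fun t => (hB (1 - t)).map _ fun _ => rfl
  have hW := hX.unitary_conj hP (star P)
  simp only [hPAB] at hW
  have hG0 : (Y (1 - 0)).map star ∈ unitaryGroup m ℂ := by
    rw [sub_zero, map_star_mem_unitaryGroup_iff]
    exact hY.mem_unitaryGroup hB (hY0 ▸ one_mem _) 1
  rw [hW.eq_mul_of_mem_unitaryGroup hB' (hY.map_star_comp_const_sub 1) hG0 t, hX0, sub_zero,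
    Matrix.mul_one, mem_unitaryGroup_iff.mp hP, Matrix.mul_one, conjTranspose_map_star]

end Schrodinger

theorem symmetrized_unitary_time_reversal_symmetry_general {d n : ℕ}
    (H : (Fin d → ℝ) → ℝ → Matrix (Fin n) (Fin n) ℂ)
    (hHherm : ∀ k t, (H k t).IsHermitian)
    (θ : Matrix (Fin n) (Fin n) ℂ) (hθ : θ ∈ Matrix.unitaryGroup (Fin n) ℂ)
    (hθH : ∀ k t, θ * H k t * θ⁻¹ = (H (-k) (1 - t)).map (starRingEnd ℂ))
    (U : (Fin d → ℝ) → ℝ → Matrix (Fin n) (Fin n) ℂ)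
    (hU0 : ∀ k, U k 0 = 1)
    (hUde : ∀ k t, HasDerivAt (U k) ((-Complex.I) • (H k t * U k t)) t)
    (US : (Fin d → ℝ) → ℝ → Matrix (Fin n) (Fin n) ℂ)
    (hUS : ∀ k t, US k t = U k ((1 + t) / 2) * (U k ((1 - t) / 2))ᴴ) :
    ∀ k t, θ * US k t * θ⁻¹ = (US (-k) t)ᵀ := by
  intro k t
  have hθinv : θ⁻¹ = star θ := inv_eq_left_inv (mem_unitaryGroup_iff'.mp hθ)
  rw [hθinv] at hθH ⊢
  have hrev (s : ℝ) : θ * U k s * star θ = (U (-k) (1 - s)).map star * (U (-k) 1)ᵀ :=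
    SolvesSchrodinger.unitary_conj_eq_map_star_mul_transpose (hHherm (-k)) hθ (hθH k)
      (hUde k) (hU0 k) (hUde (-k)) (hU0 (-k)) s
  have hV : (U (-k) 1)ᵀ ∈ unitaryGroup (Fin n) ℂ := transpose_mem_unitaryGroup_iff.mpr <|
    SolvesSchrodinger.mem_unitaryGroup (hHherm (-k)) (hUde (-k)) (hU0 (-k) ▸ one_mem _) 1
  have hsub₁ : 1 - (1 + t) / 2 = (1 - t) / 2 := by ring
  have hsub₂ : 1 - (1 - t) / 2 = (1 + t) / 2 := by ring
  calc θ * US k t * star θ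
      = (θ * U k ((1 + t) / 2) * star θ) * (θ * U k ((1 - t) / 2) * star θ)ᴴ := by
        rw [hUS, unitary_conj_mul_conjTranspose hθ]
    _ = (U (-k) ((1 - t) / 2)).map star * ((U (-k) 1)ᵀ * star (U (-k) 1)ᵀ) *
          ((U (-k) ((1 + t) / 2)).map star)ᴴ := by
        rw [hrev, hrev, hsub₁, hsub₂]
        simp only [conjTranspose_mul, star_eq_conjTranspose, Matrix.mul_assoc]
    _ = (US (-k) t)ᵀ := by
        rw [mem_unitaryGroup_iff.mp hV, Matrix.mul_one, hUS, transpose_mul,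
          conjTranspose_map_star, conjTranspose_transpose]

/-- time-reversal symmetry of the symmetrized unitary
`U_S(k,t) = U(k,(1+t)/2) (U(k,(1-t)/2))ᴴ`: it satisfies `θ U_S(k,t) θ⁻¹ = (U_S(-k,t))ᵀ`. -/
theorem symmetrized_unitary_time_reversal_symmetry {d n : ℕ} (hd : 1 ≤ d) (hn : 1 ≤ n)
    (H : (Fin d → ℝ) → ℝ → Matrix (Fin n) (Fin n) ℂ)
    (hHcont : Continuous fun p : (Fin d → ℝ) × ℝ => H p.1 p.2)
    (hHherm : ∀ k t, (H k t).IsHermitian)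
    (θ : Matrix (Fin n) (Fin n) ℂ) (hθ : θ ∈ Matrix.unitaryGroup (Fin n) ℂ)
    (hθH : ∀ k t, θ * H k t * θ⁻¹ = (H (-k) (1 - t)).map (starRingEnd ℂ))
    (U : (Fin d → ℝ) → ℝ → Matrix (Fin n) (Fin n) ℂ)
    (hU0 : ∀ k, U k 0 = 1)
    (hUde : ∀ k t, HasDerivAt (U k) ((-Complex.I) • (H k t * U k t)) t)
    (US : (Fin d → ℝ) → ℝ → Matrix (Fin n) (Fin n) ℂ)
    (hUS : ∀ k t, US k t = U k ((1 + t) / 2) * (U k ((1 - t) / 2))ᴴ) :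
    ∀ k t, θ * US k t * θ⁻¹ = (US (-k) t)ᵀ :=
  symmetrized_unitary_time_reversal_symmetry_general H hHherm θ hθ hθH U hU0 hUde US hUS
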